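/- For integers a > b > 0, the following identity of Schur polynomials in three variables holds: s_{(b+1,b+1,0)} · s_{(a+1,b+1,b+1)} = s_{(a+1,b+1,0)} · s_{(b+1,b+1,b+1)} + s_{(a,b+1,b+1)} · s_{(b+1,b+1,1)}. -/

import Mathlib

open MvPolynomial

/-- Complete homogeneous symmetric polynomial in `n` variables, indexed by an
integer, with the convention `h_k = 0` for `k < 0` and `h_0 = 1`. -/
noncomputable def hInt (n : ℕ) (k : ℤ) : MvPolynomial (Fin n) ℤ :=
  if 0 ≤ k then hsymm (Fin n) ℤ k.toNat else 0

/-- The Schur polynomial of `α` in `n` variables, defined via the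
Jacobi–Trudi determinant `s_α = det (h_{α_i - i + j})_{i,j}`. -/
noncomputable def schur (n : ℕ) (α : Fin n → ℕ) : MvPolynomial (Fin n) ℤ :=
  Matrix.det (Matrix.of fun i j : Fin n => hInt n ((α i : ℤ) - (i : ℕ) + (j : ℕ)))

/-- A symmetric polynomial is Schur positive if it is a nonnegative integer
combination of Schur polynomials of partitions. -/
def SchurPositive (n : ℕ) (f : MvPolynomial (Fin n) ℤ) : Prop :=
  ∃ c : (Fin n → ℕ) →₀ ℕ, (∀ lam ∈ c.support, Antitone lam) ∧
    f = c.sum fun lam k => (k : ℤ) • schur n lam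

/-!
Via Jacobi–Trudi every Schur polynomial in the identity is a 3 × 3 determinant in the
`h_k = hInt 3 k`. Splitting off one variable at a time, `h^{(m+1)}_k = x₀ h^{(m+1)}_{k-1} + h^{(m)}_k`
for all integers `k`, and composing these three first-order recurrences gives
`h_k - e₁ h_{k-1} + e₂ h_{k-2} - e₃ h_{k-3} = δ_{k,0}`. Eliminating `h_{a+2}, h_{a+3}, h_{b+2}, h_{b+3}`
with it turns the identity into a polynomial identity in the remaining `h`'s and free `e₁, e₂, e₃`.
-/

section Hsymm

variable {σ R : Type*} [CommSemiring R] [Fintype σ] [DecidableEq σ]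

theorem hsymm_option_succ (n : ℕ) :
    hsymm (Option σ) R (n + 1) =
      X none * hsymm (Option σ) R n + rename some (hsymm σ R (n + 1)) := by
  rw [hsymm, ← (symOptionSuccEquiv (α := σ)).symm.sum_comp, Fintype.sum_sum_type, hsymm, hsymm,
    map_sum, Finset.mul_sum]
  congr 1
  · refine Finset.sum_congr rfl fun s _ => ?_
    simp [symOptionSuccEquiv, Sym.coe_cons]
  · refine Finset.sum_congr rfl fun s _ => ?_
    simp [symOptionSuccEquiv, ← Multiset.prod_hom']

theorem hsymm_succ_of_isEmpty [IsEmpty σ] (n : ℕ) : hsymm σ R (n + 1) = 0 := by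
  simp [hsymm]

theorem hsymm_fin_succ (m n : ℕ) :
    hsymm (Fin (m + 1)) R (n + 1) =
      X 0 * hsymm (Fin (m + 1)) R n + rename Fin.succ (hsymm (Fin m) R (n + 1)) := by
  simp only [← rename_hsymm (σ := Option (Fin m)) (R := R) _ (finSuccEquiv m).symm,
    hsymm_option_succ, map_add, map_mul, rename_X, rename_rename]
  congr 2

end Hsymm

theorem hInt_of_neg {n : ℕ} {k : ℤ} (hk : k < 0) : hInt n k = 0 := by
  simp [hInt, hk.not_ge]

@[simp]
theorem hInt_natCast (n k : ℕ) : hInt n k = hsymm (Fin n) ℤ k := by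
  simp [hInt]

theorem hInt_zero_left (k : ℤ) : hInt 0 k = if k = 0 then 1 else 0 := by
  obtain hk | rfl | hk := lt_trichotomy k 0
  · simp [hInt_of_neg hk, hk.ne]
  · simp [hInt]
  · obtain ⟨n, rfl⟩ : ∃ n : ℕ, k = (n + 1 : ℕ) := ⟨k.toNat - 1, by omega⟩
    rw [hInt_natCast, hsymm_succ_of_isEmpty, if_neg (by omega)]

theorem hInt_succ_left (m : ℕ) (k : ℤ) :
    hInt (m + 1) k = X 0 * hInt (m + 1) (k - 1) + rename Fin.succ (hInt m k) := by
  obtain hk | rfl | hk := lt_trichotomy k 0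
  · simp [hInt_of_neg hk, hInt_of_neg (k := k - 1) (by omega)]
  · simp [hInt]
  · obtain ⟨n, rfl⟩ : ∃ n : ℕ, k = (n + 1 : ℕ) := ⟨k.toNat - 1, by omega⟩
    rw [show ((n + 1 : ℕ) : ℤ) - 1 = n by omega, hInt_natCast, hInt_natCast, hInt_natCast,
      hsymm_fin_succ]

theorem third_order_recurrence_of_first_order {R : Type*} [CommRing R] {u v w d : ℤ → R}
    {x y z : R} (hu : ∀ k, u k = x * u (k - 1) + v k) (hv : ∀ k, v k = y * v (k - 1) + w k)
    (hw : ∀ k, w k = z * w (k - 1) + d k) (k : ℤ) :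
    u k - (x + y + z) * u (k - 1) + (x * y + x * z + y * z) * u (k - 2)
      - x * y * z * u (k - 3) = d k := by
  have hu₁ := hu (k - 1)
  have hu₂ := hu (k - 2)
  have hv₁ := hv (k - 1)
  simp only [sub_sub] at hu₁ hu₂ hv₁
  norm_num at hu₁ hu₂ hv₁
  linear_combination hu k - (y + z) * hu₁ + y * z * hu₂ + hv k - z * hv₁ + hw k

theorem hInt_three_recurrence (k : ℤ) :
    hInt 3 k - (X 0 + X 1 + X 2) * hInt 3 (k - 1)
      + (X 0 * X 1 + X 0 * X 2 + X 1 * X 2) * hInt 3 (k - 2)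
      - X 0 * X 1 * X 2 * hInt 3 (k - 3) = if k = 0 then 1 else 0 := by
  apply third_order_recurrence_of_first_order (hInt_succ_left 2)
    (v := fun k => rename Fin.succ (hInt 2 k))
    (w := fun k => rename (Fin.succ ∘ Fin.succ) (hInt 1 k))
  · intro k
    simp [hInt_succ_left 1 k, rename_rename]
  · intro k
    simp [hInt_succ_left 0 k, hInt_zero_left, apply_ite]

section JacobiTrudi

variable {R : Type*} [CommRing R]

noncomputable def jacobiTrudi {n : ℕ} (h : ℤ → R) (l : Fin n → ℤ) : R :=
  (Matrix.of fun i j : Fin n => h (l i - (i : ℕ) + (j : ℕ))).det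

theorem schur_three_eq_jacobiTrudi (p q r : ℕ) :
    schur 3 ![p, q, r] = jacobiTrudi (hInt 3) ![(p : ℤ), q, r] := by
  rw [schur, jacobiTrudi]
  congr! 4 with i
  fin_cases i <;> rfl

theorem jacobiTrudi_three (h : ℤ → R) (p q r : ℤ) :
    jacobiTrudi h ![p, q, r] =
      h p * (h q * h r - h (q + 1) * h (r - 1))
        - h (p + 1) * (h (q - 1) * h r - h (q + 1) * h (r - 2))
        + h (p + 2) * (h (q - 1) * h (r - 1) - h q * h (r - 2)) := by
  simp only [jacobiTrudi, Matrix.det_fin_three, Matrix.of_apply, Matrix.cons_val,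
    Fin.coe_ofNat_eq_mod]
  ring_nf

theorem jacobiTrudi_identity_of_recurrence (h : ℤ → R) (e₁ e₂ e₃ : R)
    (hneg : ∀ k < 0, h k = 0)
    (hrec : ∀ k, h k - e₁ * h (k - 1) + e₂ * h (k - 2) - e₃ * h (k - 3) = if k = 0 then 1 else 0)
    (a b : ℕ) :
    jacobiTrudi h ![(b : ℤ) + 1, b + 1, 0] * jacobiTrudi h ![(a : ℤ) + 1, b + 1, b + 1] =
      jacobiTrudi h ![(a : ℤ) + 1, b + 1, 0] * jacobiTrudi h ![(b : ℤ) + 1, b + 1, b + 1] +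
      jacobiTrudi h ![(a : ℤ), b + 1, b + 1] * jacobiTrudi h ![(b : ℤ) + 1, b + 1, 1] := by
  have step (k : ℤ) (hk : k ≠ 0) : h k = e₁ * h (k - 1) - e₂ * h (k - 2) + e₃ * h (k - 3) := by
    linear_combination hrec k + (if_neg hk : (if k = 0 then (1 : R) else 0) = 0)
  have hm₁ : h (-1) = 0 := hneg _ (by norm_num)
  have hm₂ : h (-2) = 0 := hneg _ (by norm_num)
  have h₀ : h 0 = 1 := by simpa [hm₁, hm₂, hneg] using hrec 0
  have h₁ : h 1 = e₁ := by simpa [h₀, hm₁, hm₂] using step 1 one_ne_zero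
  have hb₂ := step (b + 2) (by omega)
  have hb₃ := step (b + 3) (by omega)
  have ha₂ := step (a + 2) (by omega)
  have ha₃ := step (a + 3) (by omega)
  norm_num [add_sub_assoc] at hb₂ hb₃ ha₂ ha₃
  simp only [jacobiTrudi_three]
  -- bring every index to the shape `↑a + c`, `↑b + c` of `ha₂, ha₃, hb₂, hb₃`, so they can rewrite
  norm_num [add_assoc, add_sub_assoc]
  rw [hb₃, ha₃, hb₂, ha₂, h₀, h₁, hm₁, hm₂]
  ring

end JacobiTrudi

theorem schur_identity_family1_third_general (a b : ℕ) :
    schur 3 ![b + 1, b + 1, 0] * schur 3 ![a + 1, b + 1, b + 1] =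
      schur 3 ![a + 1, b + 1, 0] * schur 3 ![b + 1, b + 1, b + 1] +
      schur 3 ![a, b + 1, b + 1] * schur 3 ![b + 1, b + 1, 1] := by
  have key := jacobiTrudi_identity_of_recurrence (hInt 3) _ _ _ (fun _ ↦ hInt_of_neg)
    hInt_three_recurrence a b
  simp only [schur_three_eq_jacobiTrudi]
  push_cast
  exact key

/-- For `a > b > 0`:
`s_{(b+1,b+1,0)} s_{(a+1,b+1,b+1)}
  = s_{(a+1,b+1,0)} s_{(b+1,b+1,b+1)} + s_{(a,b+1,b+1)} s_{(b+1,b+1,1)}`. -/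
theorem schur_identity_family1_third (a b : ℕ) (hab : b < a) (hb : 0 < b) :
    schur 3 ![b + 1, b + 1, 0] * schur 3 ![a + 1, b + 1, b + 1] =
      schur 3 ![a + 1, b + 1, 0] * schur 3 ![b + 1, b + 1, b + 1] +
      schur 3 ![a, b + 1, b + 1] * schur 3 ![b + 1, b + 1, 1] :=
  schur_identity_family1_third_general a b
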